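/- arXiv:2009.13319 — 5 statements merged into one kernel-verified Lean document; each statement's English description precedes it below -/
import Mathlib

section
/- For every integer c there exists a semicomplete digraph D (a digraph in which every pair of distinct vertices is joined by at least one arc) such that D contains no ↔K_3 (no three vertices pairwise joined by digons), D contains no induced directed triangle →C_3, and χ⃗(D) ≥ c. In particular, the set {↔K_3, K̄_2, →C_3} is not heroic. -/
/-- A directed cycle (length at least 2, pairwise distinct vertices) in the digraph
with arc relation `A`; a digon counts as a directed cycle of length 2. -/
def HasDicycle {V : Type*} (A : V → V → Prop) : Prop :=
  ∃ (n : ℕ) (f : Fin (n + 2) → V), Function.Injective f ∧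
    ∀ i : Fin (n + 2), A (f i) (f (i + 1))

/-- `c` is a dicoloring of the digraph `A`: no color class contains a directed cycle. -/
def IsDicoloring {V : Type*} (A : V → V → Prop) {k : ℕ} (c : V → Fin k) : Prop :=
  ¬ HasDicycle (fun x y => A x y ∧ c x = c y)

/-- The dichromatic number of the digraph `A`: the least number of colors in a dicoloring. -/
noncomputable def dichromaticNumber {V : Type*} (A : V → V → Prop) : ℕ :=
  sInf {k : ℕ | ∃ c : V → Fin k, IsDicoloring A c}

/-- The digraph `B` appears as an induced subdigraph of the digraph `A`. -/
def HasInducedCopy {V W : Type*} (A : V → V → Prop) (B : W → W → Prop) : Prop :=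
  ∃ f : W → V, Function.Injective f ∧ ∀ x y, B x y ↔ A (f x) (f y)

/-- An oriented graph: at most one arc between any pair of vertices
(in particular no loops and no digons). -/
def IsOrientedGraph {V : Type*} (A : V → V → Prop) : Prop :=
  ∀ x y, A x y → ¬ A y x

/-- The complete symmetric digraph `↔K_k` (all digons present). -/
def symK (k : ℕ) : Fin k → Fin k → Prop := fun x y => x ≠ y

/-- The arcless digraph `K̄_k`. -/
def emptyK (k : ℕ) : Fin k → Fin k → Prop := fun _ _ => False

/-- The transitive tournament `TT_t` (note `TT_2 = →K_2`). -/
def transTour (t : ℕ) : Fin t → Fin t → Prop := fun x y => x < y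

/-- The directed triangle `→C_3`. -/
def dirC3 : Fin 3 → Fin 3 → Prop := fun x y => (y : ℕ) = ((x : ℕ) + 1) % 3

/-- The directed path `P^+(k)`: `k` arcs all oriented in the same direction, on `k+1` vertices. -/
def dirPath (k : ℕ) : Fin (k + 1) → Fin (k + 1) → Prop := fun x y => (x : ℕ) + 1 = (y : ℕ)

/-- `→K_2 + K_1`: a single arc together with an isolated vertex. -/
def K2plusK1 : Fin 3 → Fin 3 → Prop := fun x y => x = 0 ∧ y = 1

/-- `S_2^+`: the oriented star with two arcs leaving the center. -/
def S2plus : Fin 3 → Fin 3 → Prop := fun x y => x = 0 ∧ (y = 1 ∨ y = 2)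

/-- `S_2^-`: the oriented star with two arcs entering the center. -/
def S2minus : Fin 3 → Fin 3 → Prop := fun x y => (x = 1 ∨ x = 2) ∧ y = 0

/-- The oriented graph `R` on vertices `a,…,g = 0,…,6` with arcs
`a→b, b→c, c→a, b→d, d→a, c→e, e→b, f→d, d→g, g→f, f→e, e→g`. -/
def Rdigraph : Fin 7 → Fin 7 → Prop := fun x y =>
  (x = 0 ∧ y = 1) ∨ (x = 1 ∧ y = 2) ∨ (x = 2 ∧ y = 0) ∨ (x = 1 ∧ y = 3) ∨ (x = 3 ∧ y = 0) ∨
  (x = 2 ∧ y = 4) ∨ (x = 4 ∧ y = 1) ∨ (x = 5 ∧ y = 3) ∨ (x = 3 ∧ y = 6) ∨ (x = 6 ∧ y = 5) ∨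
  (x = 5 ∧ y = 4) ∨ (x = 4 ∧ y = 6)

/-- The adjacency pattern of the (undirected) path on `4` vertices. -/
def pathGraph4 : Fin 4 → Fin 4 → Prop := fun x y =>
  (x : ℕ) + 1 = (y : ℕ) ∨ (y : ℕ) + 1 = (x : ℕ)

/-- The underlying undirected graph of `A` contains the pattern `P` as an induced subgraph. -/
def HasInducedUCopy {V W : Type*} (A : V → V → Prop) (P : W → W → Prop) : Prop :=
  ∃ f : W → V, Function.Injective f ∧ ∀ x y, P x y ↔ (A (f x) (f y) ∨ A (f y) (f x))

/-- The underlying undirected graph of `A` is triangle-free. -/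
def UTriangleFree {V : Type*} (A : V → V → Prop) : Prop :=
  ¬ ∃ x y z : V, (A x y ∨ A y x) ∧ (A y z ∨ A z y) ∧ (A x z ∨ A z x)

/-- The underlying undirected graph of `A` contains no `K_4`. -/
def UK4Free {V : Type*} (A : V → V → Prop) : Prop :=
  ¬ ∃ a b c d : V, (A a b ∨ A b a) ∧ (A a c ∨ A c a) ∧ (A a d ∨ A d a) ∧
    (A b c ∨ A c b) ∧ (A b d ∨ A d b) ∧ (A c d ∨ A d c)

/-- The underlying undirected (simple) graph of the digraph `A`. -/
def underlyingGraph {V : Type*} (A : V → V → Prop) : SimpleGraph V where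
  Adj x y := x ≠ y ∧ (A x y ∨ A y x)
  symm := ⟨fun x y h => ⟨Ne.symm h.1, h.2.symm⟩⟩
  loopless := ⟨fun _ h => h.1 rfl⟩

/-!
Take the transitive tournament on the ordered pairs `(i, j)`, `i < j`, of `[N]`, and turn
into a digon every arc `(i, j) → (j, l)` of the shift graph. Every non-digon arc goes forward
in the order, so there is no induced `→C_3`; a `↔K_3` would be a triangle of the shift graph,
which is triangle-free; and a dicoloring properly colors the shift graph, which needs at least
`log₂ N` colors, since the sets of colors `{col (i, j) | j > i}` must be pairwise distinct.
Semicomplete digraphs have no induced `K̄_2`, so this also shows non-heroicity.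
-/

open SimpleGraph

section Dicoloring

variable {V : Type*} {A : V → V → Prop}

theorem IsDicoloring.ne_of_digon {k : ℕ} {c : V → Fin k} (hc : IsDicoloring A c) {x y : V}
    (hne : x ≠ y) (hxy : A x y) (hyx : A y x) : c x ≠ c y := by
  intro hcxy
  refine hc ⟨0, ![x, y], ?_, ?_⟩
  · intro i j hij
    fin_cases i <;> fin_cases j <;> simp_all [eq_comm]
  · intro i
    fin_cases i
    exacts [⟨hxy, hcxy⟩, ⟨hyx, hcxy.symm⟩]

theorem IsDicoloring.colorable {G : SimpleGraph V} (hG : ∀ x y, G.Adj x y → A x y) {k : ℕ}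
    {c : V → Fin k} (hc : IsDicoloring A c) : G.Colorable k :=
  ⟨Coloring.mk c fun hxy => hc.ne_of_digon hxy.ne (hG _ _ hxy) (hG _ _ hxy.symm)⟩

theorem isDicoloring_of_injective {k : ℕ} {c : V → Fin k} (hc : c.Injective) :
    IsDicoloring A c := by
  rintro ⟨n, f, hf, hcycle⟩
  have h01 : (0 : Fin (n + 2)) ≠ 0 + 1 := by simp
  exact h01 (hf (hc (hcycle 0).2))

theorem exists_isDicoloring_dichromaticNumber [Finite V] (A : V → V → Prop) :
    ∃ c : V → Fin (dichromaticNumber A), IsDicoloring A c := by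
  obtain ⟨n, ⟨e⟩⟩ := Finite.exists_equiv_fin V
  exact Nat.sInf_mem (s := {k | ∃ c : V → Fin k, IsDicoloring A c})
    ⟨n, e, isDicoloring_of_injective e.injective⟩

theorem colorable_dichromaticNumber [Finite V] {G : SimpleGraph V}
    (hG : ∀ x y, G.Adj x y → A x y) : G.Colorable (dichromaticNumber A) :=
  (exists_isDicoloring_dichromaticNumber A).choose_spec.colorable hG

theorem not_hasInducedCopy_emptyK_two (hA : ∀ x y : V, x ≠ y → A x y ∨ A y x) :
    ¬ HasInducedCopy A (emptyK 2) := by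
  rintro ⟨f, hf, hcopy⟩
  rcases hA (f 0) (f 1) (hf.ne (by decide)) with h | h
  exacts [(hcopy 0 1).2 h, (hcopy 1 0).2 h]

end Dicoloring

section TransTourWithDigons

variable {α : Type*} [LinearOrder α] {G : SimpleGraph α} {x y : α}

def transTourWithDigons (G : SimpleGraph α) (x y : α) : Prop :=
  x < y ∨ G.Adj x y

theorem transTourWithDigons_irrefl (x : α) : ¬ transTourWithDigons G x x := by
  rintro (h | h)
  exacts [lt_irrefl x h, G.loopless.irrefl x h]

theorem transTourWithDigons_total (h : x ≠ y) :
    transTourWithDigons G x y ∨ transTourWithDigons G y x :=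
  (lt_or_gt_of_ne h).imp Or.inl Or.inl

theorem adj_of_transTourWithDigons (hxy : transTourWithDigons G x y)
    (hyx : transTourWithDigons G y x) : G.Adj x y := by
  rcases hxy with hxy | hxy
  · rcases hyx with hyx | hyx
    exacts [absurd hxy hyx.asymm, hyx.symm]
  · exact hxy

theorem lt_of_transTourWithDigons (hxy : transTourWithDigons G x y)
    (hyx : ¬ transTourWithDigons G y x) : x < y :=
  hxy.resolve_right fun h => hyx (Or.inr h.symm)

theorem not_hasInducedCopy_transTourWithDigons_symK {k : ℕ} (hG : G.CliqueFree k) :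
    ¬ HasInducedCopy (transTourWithDigons G) (symK k) := by
  rintro ⟨f, hf, hcopy⟩
  have clique : completeGraph (Fin k) ↪g G :=
    ⟨⟨f, hf⟩, fun {i j} => ⟨fun h => (hcopy i j).2 (Or.inr h),
      fun h => adj_of_transTourWithDigons ((hcopy i j).1 h) ((hcopy j i).1 (Ne.symm h))⟩⟩
  exact clique.isContained.not_cliqueFree hG

theorem not_hasInducedCopy_transTourWithDigons_dirC3 :
    ¬ HasInducedCopy (transTourWithDigons G) dirC3 := by
  rintro ⟨f, -, hcopy⟩
  have forward : ∀ i : Fin 3, f i < f (i + 1) := by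
    intro i
    refine lt_of_transTourWithDigons ((hcopy _ _).1 ?_) fun h => ?_
    · fin_cases i <;> rfl
    · have := (hcopy _ _).2 h
      fin_cases i <;> simp [dirC3] at this
  exact lt_asymm ((forward 0).trans (forward 1)) (forward 2)

end TransTourWithDigons

section ShiftGraph

-- Pairs `(i, j)` with `j ≤ i` are isolated vertices.
def shiftGraph (N : ℕ) : SimpleGraph (Fin N × Fin N) :=
  fromRel fun p q => p.1 < p.2 ∧ p.2 = q.1 ∧ q.1 < q.2

theorem shiftGraph_cliqueFree_three (N : ℕ) : (shiftGraph N).CliqueFree 3 := by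
  intro t ht
  obtain ⟨a, b, c, hab, hac, hbc, -⟩ := is3Clique_iff.1 ht
  simp only [shiftGraph, fromRel_adj] at hab hac hbc
  omega

theorem le_two_pow_of_shiftGraph_colorable {N k : ℕ} (h : (shiftGraph N).Colorable k) :
    N ≤ 2 ^ k := by
  obtain ⟨col⟩ := h
  let colorsAbove (i : Fin N) : Finset (Fin k) := (Finset.Ioi i).image fun j => col (i, j)
  have hinj : colorsAbove.Injective := by
    refine Function.Injective.of_lt_imp_ne fun i j hij heq => ?_
    have hmem : col (i, j) ∈ colorsAbove j :=
      heq ▸ Finset.mem_image_of_mem _ (Finset.mem_Ioi.2 hij)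
    obtain ⟨l, hjl, hcol⟩ := Finset.mem_image.1 hmem
    refine col.valid ?_ hcol.symm
    exact (fromRel_adj _ _ _).2
      ⟨by simp [hij.ne], Or.inl ⟨hij, rfl, Finset.mem_Ioi.1 hjl⟩⟩
  simpa using Fintype.card_le_of_injective _ hinj

end ShiftGraph

theorem exists_semicomplete_dichromaticNumber_ge (c : ℕ) :
    ∃ (n : ℕ) (A : Fin n → Fin n → Prop), (∀ x, ¬ A x x) ∧
      (∀ x y : Fin n, x ≠ y → A x y ∨ A y x) ∧
      ¬ HasInducedCopy A (symK 3) ∧ ¬ HasInducedCopy A dirC3 ∧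
      c ≤ dichromaticNumber A := by
  let e : Fin (2 ^ c * 2 ^ c) ≃ Fin (2 ^ c) × Fin (2 ^ c) := finProdFinEquiv.symm
  let G := (shiftGraph (2 ^ c)).comap e
  have hG : G.CliqueFree 3 := (shiftGraph_cliqueFree_three _).comap (Iso.comap e _).isContained
  have hcolor : (shiftGraph (2 ^ c)).Colorable (dichromaticNumber (transTourWithDigons G)) :=
    (colorable_dichromaticNumber fun _ _ h => Or.inr h).of_hom (Iso.comap e _).symm.toHom
  refine ⟨_, transTourWithDigons G, transTourWithDigons_irrefl,
    fun _ _ => transTourWithDigons_total, not_hasInducedCopy_transTourWithDigons_symK hG,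
    not_hasInducedCopy_transTourWithDigons_dirC3, ?_⟩
  exact (Nat.pow_le_pow_iff_right one_lt_two).1 (le_two_pow_of_shiftGraph_colorable hcolor)

/-- For every `c` there is a semicomplete digraph with no `↔K_3`, no induced `→C_3`, and
dichromatic number at least `c`; in particular `{↔K_3, K̄_2, →C_3}` is not heroic. -/
theorem semicomplete_not_heroic :
    (∀ c : ℕ, ∃ (n : ℕ) (A : Fin n → Fin n → Prop), Irreflexive A ∧
      (∀ x y : Fin n, x ≠ y → A x y ∨ A y x) ∧
      ¬ HasInducedCopy A (symK 3) ∧ ¬ HasInducedCopy A dirC3 ∧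
      c ≤ dichromaticNumber A) ∧
    ¬ (∃ c : ℕ, ∀ (n : ℕ) (A : Fin n → Fin n → Prop), Irreflexive A →
      ¬ HasInducedCopy A (symK 3) → ¬ HasInducedCopy A (emptyK 2) →
      ¬ HasInducedCopy A dirC3 → dichromaticNumber A ≤ c) := by
  refine ⟨exists_semicomplete_dichromaticNumber_ge, ?_⟩
  rintro ⟨c, hc⟩
  obtain ⟨n, A, hirr, htotal, hK3, hC3, hχ⟩ := exists_semicomplete_dichromaticNumber_ge (c + 1)
  have := hc n A hirr hK3 (not_hasInducedCopy_emptyK_two htotal) hC3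
  omega
end

section
/- Every oriented graph with no induced directed triangle →C_3 and no induced copy of →K_2 + K_1 (the disjoint union of a single arc and an isolated vertex) has dichromatic number at most 2; moreover there exists such an oriented graph with dichromatic number exactly 2 (for instance the directed 4-cycle), so the maximum dichromatic number over this class equals 2. -/
/-!
Forbidding an induced `→K_2 + K_1` makes non-adjacency transitive, so the underlying graph is
complete multipartite. Suppose a strong component contained a transitive triangle
`s → m → t`, `s → t`, and take a walk `t = u 0 → ⋯ → u k = s` without shortcuts
`u i → u (i + 2)`. A back arc `u (i + 2) → u i` would close a directed triangle, so the walk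
alternates between the parts of `t` and of `u 1`, which is also the part of `s`. Hence `m` is
adjacent to every `u i`, and the absence of directed triangles propagates `m → u i` along the
walk up to `m → s`, against `s → m`. So every strong component is complete bipartite, and
colouring each one by its two sides is a 2-dicolouring. The directed 4-cycle needs 2 colours.
-/

open Relation

lemma SimpleGraph.IsCompleteMultipartite.adj_of_adj_of_not_adj {V : Type*} {G : SimpleGraph V}
    (hG : G.IsCompleteMultipartite) {x y z : V} (hxy : G.Adj x y) (hyz : ¬ G.Adj y z) :
    G.Adj x z :=
  not_not.1 fun hxz => hG.trans y z x hyz (mt G.adj_symm hxz) hxy.symm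

section Digraph

variable {V : Type*} {A : V → V → Prop}

lemma IsOrientedGraph.irrefl (hA : IsOrientedGraph A) (x : V) : ¬ A x x :=
  fun hx => hA x x hx hx

lemma IsOrientedGraph.underlyingGraph_adj (hA : IsOrientedGraph A) {x y : V} :
    (underlyingGraph A).Adj x y ↔ A x y ∨ A y x := by
  refine ⟨And.right, fun h => ⟨?_, h⟩⟩
  rintro rfl
  exact h.elim (hA.irrefl x) (hA.irrefl x)

lemma IsOrientedGraph.not_closing_arc (hA : IsOrientedGraph A)
    (hC3 : ¬ HasInducedCopy A dirC3) {x y z : V} (hxy : A x y) (hyz : A y z) : ¬ A z x := by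
  intro hzx
  have hx := hA.irrefl x
  have hy := hA.irrefl y
  have hz := hA.irrefl z
  refine hC3 ⟨![x, y, z], fun i j hij => ?_, fun i j => ?_⟩
  · fin_cases i <;> fin_cases j <;> simp_all
  · fin_cases i <;> fin_cases j <;> simp [dirC3, *, hA _ _ hxy, hA _ _ hyz, hA _ _ hzx]

lemma IsOrientedGraph.isCompleteMultipartite (hA : IsOrientedGraph A)
    (hK : ¬ HasInducedCopy A K2plusK1) : (underlyingGraph A).IsCompleteMultipartite := by
  refine ⟨fun x y z hxy hyz hxz => ?_⟩
  rw [hA.underlyingGraph_adj, not_or] at hxy hyz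
  rw [hA.underlyingGraph_adj] at hxz
  obtain ⟨hxy, hyx⟩ := hxy
  obtain ⟨hyz, hzy⟩ := hyz
  have hx := hA.irrefl x
  have hy := hA.irrefl y
  have hz := hA.irrefl z
  rcases hxz with hxz | hzx
  · refine hK ⟨![x, z, y], fun i j hij => ?_, fun i j => ?_⟩
    · fin_cases i <;> fin_cases j <;> simp_all
    · fin_cases i <;> fin_cases j <;> simp [K2plusK1, *, hA _ _ hxz]
  · refine hK ⟨![z, x, y], fun i j hij => ?_, fun i j => ?_⟩
    · fin_cases i <;> fin_cases j <;> simp_all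
    · fin_cases i <;> fin_cases j <;> simp [K2plusK1, *, hA _ _ hzx]

-- `u 0 → u 1 → ⋯ → u k`; the values of `u` past `k` play no role.
def IsDiwalk (A : V → V → Prop) (u : ℕ → V) (k : ℕ) : Prop :=
  ∀ i < k, A (u i) (u (i + 1))

lemma Relation.ReflTransGen.exists_isDiwalk {a b : V} (h : ReflTransGen A a b) :
    ∃ k u, u 0 = a ∧ u k = b ∧ IsDiwalk A u k := by
  induction h with
  | refl => exact ⟨0, fun _ => a, rfl, rfl, fun i hi => absurd hi (Nat.not_lt_zero i)⟩
  | @tail b c _ hbc ih =>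
    obtain ⟨k, u, hu0, huk, hu⟩ := ih
    refine ⟨k + 1, fun i => if i ≤ k then u i else c, by simp [hu0], by simp, fun i hi => ?_⟩
    rcases Nat.lt_or_ge i k with hik | hik
    · simpa [hik.le, Nat.succ_le_of_lt hik] using hu i hik
    · obtain rfl : i = k := by omega
      simpa [huk] using hbc

lemma IsDiwalk.skip {u : ℕ → V} {k i : ℕ} (hu : IsDiwalk A u k) (hik : i + 2 ≤ k)
    (hshort : A (u i) (u (i + 2))) :
    IsDiwalk A (fun j => if j ≤ i then u j else u (j + 1)) (k - 1) := by
  intro j hj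
  rcases Nat.lt_trichotomy j i with hji | rfl | hji
  · simpa [hji.le, show j + 1 ≤ i by omega] using hu j (by omega)
  · simpa using hshort
  · simpa [show ¬ j ≤ i by omega, show ¬ j + 1 ≤ i by omega] using hu (j + 1) (by omega)

lemma IsDiwalk.exists_without_shortcut {u : ℕ → V} {k : ℕ} (hu : IsDiwalk A u k) :
    ∃ k' w, w 0 = u 0 ∧ w k' = u k ∧ IsDiwalk A w k' ∧
      ∀ i, i + 2 ≤ k' → ¬ A (w i) (w (i + 2)) := by
  induction k using Nat.strong_induction_on generalizing u with
  | _ k ih =>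
    by_cases hshort : ∃ i, i + 2 ≤ k ∧ A (u i) (u (i + 2))
    · obtain ⟨i, hik, hi⟩ := hshort
      obtain ⟨k', w, hw0, hwk, hw⟩ := ih (k - 1) (by omega) (hu.skip hik hi)
      refine ⟨k', w, by simp [hw0], ?_, hw⟩
      rw [hwk, if_neg (by omega), Nat.sub_add_cancel (by omega)]
    · push Not at hshort
      exact ⟨k, u, rfl, rfl, hu, hshort⟩

lemma Relation.ReflTransGen.exists_isDiwalk_without_shortcut {a b : V}
    (h : ReflTransGen A a b) : ∃ k u, u 0 = a ∧ u k = b ∧ IsDiwalk A u k ∧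
      ∀ i, i + 2 ≤ k → ¬ A (u i) (u (i + 2)) := by
  obtain ⟨k, u, rfl, rfl, hu⟩ := h.exists_isDiwalk
  exact hu.exists_without_shortcut

lemma IsDiwalk.not_adj_mod_two (hA : IsOrientedGraph A) (hC3 : ¬ HasInducedCopy A dirC3)
    (hG : (underlyingGraph A).IsCompleteMultipartite) {u : ℕ → V} {k : ℕ}
    (hu : IsDiwalk A u k) (hshort : ∀ i, i + 2 ≤ k → ¬ A (u i) (u (i + 2))) :
    ∀ i ≤ k, ¬ (underlyingGraph A).Adj (u i) (u (i % 2)) := by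
  intro i
  induction i using Nat.strong_induction_on with
  | _ i ih =>
    intro hik
    match i, ih with
    | 0, _ => exact (underlyingGraph A).loopless.irrefl _
    | 1, _ => exact (underlyingGraph A).loopless.irrefl _
    | j + 2, ih =>
      have hj : ¬ (underlyingGraph A).Adj (u (j + 2)) (u j) := by
        rw [hA.underlyingGraph_adj, not_or]
        exact ⟨hA.not_closing_arc hC3 (hu j (by omega)) (hu (j + 1) (by omega)),
          hshort j hik⟩
      simpa using hG.trans _ _ _ hj (ih j (by omega) (by omega))

theorem IsOrientedGraph.not_reflTransGen_of_transitive_triangle (hA : IsOrientedGraph A)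
    (hC3 : ¬ HasInducedCopy A dirC3) (hK : ¬ HasInducedCopy A K2plusK1) {s m t : V}
    (hsm : A s m) (hmt : A m t) (hst : A s t) : ¬ ReflTransGen A t s := by
  intro hts
  have hG := hA.isCompleteMultipartite hK
  obtain ⟨k, u, hu0, huk, hu, hshort⟩ := hts.exists_isDiwalk_without_shortcut
  have halt := hu.not_adj_mod_two hA hC3 hG hshort
  have hs1 : ¬ (underlyingGraph A).Adj s (u 1) := by
    have hsk := huk ▸ halt k le_rfl
    rcases Nat.mod_two_eq_zero_or_one k with h | h
    · rw [h, hu0] at hsk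
      exact absurd (hA.underlyingGraph_adj.2 (.inl hst)) hsk
    · rwa [h] at hsk
  have hm : ∀ i ≤ k, (underlyingGraph A).Adj m (u i) := by
    intro i hi
    have hui := mt (underlyingGraph A).adj_symm (halt i hi)
    rcases Nat.mod_two_eq_zero_or_one i with h | h
    · rw [h, hu0] at hui
      exact hG.adj_of_adj_of_not_adj (hA.underlyingGraph_adj.2 (.inl hmt)) hui
    · rw [h] at hui
      have hms := hA.underlyingGraph_adj.2 (.inr hsm)
      exact hG.adj_of_adj_of_not_adj (hG.adj_of_adj_of_not_adj hms hs1) hui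
  have hmu : ∀ i ≤ k, A m (u i) := by
    intro i
    induction i with
    | zero => exact fun _ => hu0 ▸ hmt
    | succ i ih =>
      intro hi
      refine (hA.underlyingGraph_adj.1 (hm (i + 1) hi)).resolve_right ?_
      exact hA.not_closing_arc hC3 (ih (by omega)) (hu i (by omega))
  exact hA s m hsm (huk ▸ hmu k le_rfl)

theorem IsOrientedGraph.not_adj_of_arc_of_antisymmRel (hA : IsOrientedGraph A)
    (hC3 : ¬ HasInducedCopy A dirC3) (hK : ¬ HasInducedCopy A K2plusK1) {x y z : V}
    (hxy : A x y) (hyx : ReflTransGen A y x) (hxz : AntisymmRel (ReflTransGen A) x z)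
    (hxz_adj : (underlyingGraph A).Adj x z) : ¬ (underlyingGraph A).Adj y z := by
  intro hyz_adj
  rcases hA.underlyingGraph_adj.1 hxz_adj with hxz' | hzx' <;>
    rcases hA.underlyingGraph_adj.1 hyz_adj with hyz' | hzy'
  · exact hA.not_reflTransGen_of_transitive_triangle hC3 hK hxy hyz' hxz' hxz.2
  · exact hA.not_reflTransGen_of_transitive_triangle hC3 hK hxz' hzy' hxy hyx
  · exact hA.not_closing_arc hC3 hxy hyz' hzx'
  · exact hA.not_reflTransGen_of_transitive_triangle hC3 hK hzx' hxy hzy' (hyx.trans hxz.1)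

lemma HasDicycle.exists_arc_reflTransGen (h : HasDicycle A) :
    ∃ x y, A x y ∧ ReflTransGen A y x := by
  obtain ⟨n, f, -, hf⟩ := h
  have hreach : ∀ i, ReflTransGen A (f 0) (f i) := by
    refine Fin.induction .refl fun i hi => hi.tail ?_
    simpa [Fin.coeSucc_eq_succ] using hf i.castSucc
  exact ⟨f (Fin.last _), f 0, by simpa using hf (Fin.last _), hreach _⟩

noncomputable def strongRep (A : V → V → Prop) (v : V) : V :=
  ofAntisymmetrization (ReflTransGen A) (toAntisymmetrization (ReflTransGen A) v)

lemma antisymmRel_strongRep (v : V) : AntisymmRel (ReflTransGen A) v (strongRep A v) :=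
  AntisymmRel.symm (Quotient.mk_out (s := AntisymmRel.setoid V (ReflTransGen A)) v)

lemma strongRep_eq_of_antisymmRel {u v : V} (h : AntisymmRel (ReflTransGen A) u v) :
    strongRep A u = strongRep A v :=
  congrArg (ofAntisymmetrization _) (Quotient.sound h)

open Classical in
noncomputable def componentSideColoring (A : V → V → Prop) (v : V) : Fin 2 :=
  if (underlyingGraph A).Adj v (strongRep A v) then 1 else 0

theorem IsOrientedGraph.isDicoloring_componentSideColoring (hA : IsOrientedGraph A)
    (hC3 : ¬ HasInducedCopy A dirC3) (hK : ¬ HasInducedCopy A K2plusK1) :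
    IsDicoloring A (componentSideColoring A) := by
  intro hcyc
  obtain ⟨x, y, ⟨hxy, hcol⟩, hyx⟩ := hcyc.exists_arc_reflTransGen
  replace hyx : ReflTransGen A y x := ReflTransGen.mono (fun _ _ h => h.1) _ _ hyx
  have hrep : strongRep A y = strongRep A x := strongRep_eq_of_antisymmRel ⟨hyx, .single hxy⟩
  have hxy' : (underlyingGraph A).Adj x y := hA.underlyingGraph_adj.2 (.inl hxy)
  unfold componentSideColoring at hcol
  rw [hrep] at hcol
  split_ifs at hcol with hx hy hy
  · exact hA.not_adj_of_arc_of_antisymmRel hC3 hK hxy hyx (antisymmRel_strongRep x) hx hy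
  · exact absurd hcol (by decide)
  · exact absurd hcol (by decide)
  · exact (hA.isCompleteMultipartite hK).trans _ _ _ hx (mt (underlyingGraph A).adj_symm hy)
      hxy'

lemma dichromaticNumber_le {k : ℕ} {c : V → Fin k} (hc : IsDicoloring A c) :
    dichromaticNumber A ≤ k :=
  Nat.sInf_le ⟨c, hc⟩

lemma HasDicycle.not_isDicoloring {k : ℕ} (h : HasDicycle A) (hk : k ≤ 1) (c : V → Fin k) :
    ¬ IsDicoloring A c := by
  obtain ⟨n, f, hf, harc⟩ := h
  have : Subsingleton (Fin k) := Fin.subsingleton_iff_le_one.2 hk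
  intro hc
  apply hc
  exact ⟨n, f, hf, fun i => ⟨harc i, Subsingleton.elim _ _⟩⟩

lemma HasDicycle.dichromaticNumber_eq_two (h : HasDicycle A) {c : V → Fin 2}
    (hc : IsDicoloring A c) : dichromaticNumber A = 2 := by
  refine le_antisymm (dichromaticNumber_le hc) (not_lt.1 fun hlt => ?_)
  obtain ⟨c', hc'⟩ : ∃ c' : V → Fin (dichromaticNumber A), IsDicoloring A c' :=
    Nat.sInf_mem (s := {k | ∃ c : V → Fin k, IsDicoloring A c}) ⟨2, c, hc⟩
  exact h.not_isDicoloring (by omega) c' hc'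

end Digraph

def dirC4 : Fin 4 → Fin 4 → Prop := fun x y => y = x + 1

lemma isOrientedGraph_dirC4 : IsOrientedGraph dirC4 := by
  unfold IsOrientedGraph dirC4; decide

lemma not_hasInducedCopy_dirC4_dirC3 : ¬ HasInducedCopy dirC4 dirC3 := by
  unfold HasInducedCopy dirC4 dirC3; decide

lemma not_hasInducedCopy_dirC4_K2plusK1 : ¬ HasInducedCopy dirC4 K2plusK1 := by
  unfold HasInducedCopy dirC4 K2plusK1; decide

lemma hasDicycle_dirC4 : HasDicycle dirC4 :=
  ⟨2, id, Function.injective_id, fun _ => rfl⟩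

/-- Every oriented graph with no induced `→C_3` and no induced `→K_2 + K_1` has dichromatic
number at most 2, and this is attained, so the maximum over the class equals 2. -/
theorem dichromatic_no_C3_no_K2K1 :
    (∀ (n : ℕ) (A : Fin n → Fin n → Prop), IsOrientedGraph A →
      ¬ HasInducedCopy A dirC3 → ¬ HasInducedCopy A K2plusK1 →
      dichromaticNumber A ≤ 2) ∧
    (∃ (n : ℕ) (A : Fin n → Fin n → Prop), IsOrientedGraph A ∧
      ¬ HasInducedCopy A dirC3 ∧ ¬ HasInducedCopy A K2plusK1 ∧
      dichromaticNumber A = 2) := by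
  refine ⟨fun n A hA hC3 hK =>
    dichromaticNumber_le (hA.isDicoloring_componentSideColoring hC3 hK), ?_⟩
  have hC4 := isOrientedGraph_dirC4.isDicoloring_componentSideColoring
    not_hasInducedCopy_dirC4_dirC3 not_hasInducedCopy_dirC4_K2plusK1
  exact ⟨4, dirC4, isOrientedGraph_dirC4, not_hasInducedCopy_dirC4_dirC3,
    not_hasInducedCopy_dirC4_K2plusK1, hasDicycle_dirC4.dichromaticNumber_eq_two hC4⟩
end

section
/- Let D be a round oriented graph, i.e., an oriented graph whose vertices can be cyclically ordered v_1, …, v_n so that whenever v_i v_j is an arc, then v_i v_k and v_k v_j are also arcs for every index k lying cyclically strictly between i and j. Then the dichromatic number of D is at most 2. -/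
/-!
Colour a vertex by whether it has an out-neighbour earlier in the cyclic enumeration. Inside a
colour class every arc goes forward: for the class without backward arcs this is immediate, and
if `a → b` is backward and `b → u` is backward too, then `u` lies cyclically between `a` and `b`,
so roundness gives `u → b`, a digon. The position in the enumeration therefore strictly increases
along monochromatic arcs, which rules out monochromatic directed cycles.
-/

theorem not_hasDicycle_of_strictMono {V α : Type*} [Preorder α] {A : V → V → Prop}
    (r : V → α) (hr : ∀ x y, A x y → r x < r y) : ¬ HasDicycle A := by
  rintro ⟨m, f, -, hf⟩
  have hle (i : Fin (m + 2)) : r (f 0) ≤ r (f i) := by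
    induction i using Fin.induction with
    | zero => exact le_rfl
    | succ i ih => exact ih.trans (Fin.coeSucc_eq_succ ▸ hr _ _ (hf i.castSucc)).le
  have hlast := hr _ _ (hf (Fin.last (m + 1)))
  rw [Fin.last_add_one] at hlast
  exact lt_irrefl _ ((hle _).trans_lt hlast)

section BackArc

variable {V : Type*} (A : V → V → Prop) {n : ℕ} (e : V ≃ Fin n)

def HasBackArc (v : V) : Prop :=
  ∃ u, A v u ∧ e u < e v

open Classical in
noncomputable def backArcColoring (v : V) : Fin 2 :=
  if HasBackArc A e v then 0 else 1

variable {A e}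

theorem hasBackArc_iff_of_backArcColoring_eq {v w : V}
    (h : backArcColoring A e v = backArcColoring A e w) :
    HasBackArc A e v ↔ HasBackArc A e w := by
  unfold backArcColoring at h
  split_ifs at h <;> simp_all

end BackArc

/-- The roundness condition on an enumeration `e` of the vertices: `((e z : ℕ) + n - e x) % n`
is the cyclic distance from `x` to `z`. -/
def IsRoundOrdering {V : Type*} (A : V → V → Prop) {n : ℕ} (e : V ≃ Fin n) : Prop :=
  ∀ x y z : V, A x y →
    (0 < ((e z : ℕ) + n - (e x : ℕ)) % n ∧
      ((e z : ℕ) + n - (e x : ℕ)) % n < ((e y : ℕ) + n - (e x : ℕ)) % n) →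
    A x z ∧ A z y

namespace IsRoundOrdering

variable {V : Type*} {A : V → V → Prop} {n : ℕ} {e : V ≃ Fin n}

/-- A backward arc `x → y` wraps around the end of the enumeration, so every `z` before `y`
lies cyclically between `x` and `y`. -/
theorem arc_of_lt_of_lt (hr : IsRoundOrdering A e) {x y z : V} (hxy : A x y)
    (hzy : e z < e y) (hyx : e y < e x) : A z y := by
  have hx : (e x : ℕ) < n := (e x).isLt
  rw [Fin.lt_def] at hzy hyx
  refine (hr x y z hxy ?_).2
  rw [Nat.mod_eq_of_lt (by omega), Nat.mod_eq_of_lt (by omega)]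
  omega

theorem lt_of_arc_of_hasBackArc_iff (hor : IsOrientedGraph A) (hr : IsRoundOrdering A e)
    {a b : V} (hab : A a b) (hback : HasBackArc A e a ↔ HasBackArc A e b) : e a < e b := by
  by_contra! hba
  have hlt : e b < e a := lt_of_le_of_ne hba fun h => hor a b hab (by rwa [e.injective h] at hab ⊢)
  obtain ⟨u, hbu, hub⟩ := hback.1 ⟨b, hab, hlt⟩
  exact hor b u hbu (hr.arc_of_lt_of_lt hab hub hlt)

end IsRoundOrdering

theorem round_dichromatic_le_two_general {V : Type*} (A : V → V → Prop)
    (hor : IsOrientedGraph A)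
    (hround : ∃ (n : ℕ) (e : V ≃ Fin n),
      ∀ x y z : V, A x y →
        (0 < ((e z : ℕ) + n - (e x : ℕ)) % n ∧
          ((e z : ℕ) + n - (e x : ℕ)) % n < ((e y : ℕ) + n - (e x : ℕ)) % n) →
        A x z ∧ A z y) :
    dichromaticNumber A ≤ 2 := by
  obtain ⟨n, e, hr⟩ := hround
  refine Nat.sInf_le ⟨backArcColoring A e, not_hasDicycle_of_strictMono e ?_⟩
  rintro a b ⟨hab, hcolor⟩
  exact IsRoundOrdering.lt_of_arc_of_hasBackArc_iff hor hr hab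
    (hasBackArc_iff_of_backArcColoring_eq hcolor)

/-- Every round oriented graph (there is a cyclic ordering of the vertices so that whenever
`xy` is an arc, `xz` and `zy` are arcs for every `z` cyclically strictly between `x` and `y`)
has dichromatic number at most 2. -/
theorem round_dichromatic_le_two {V : Type*} [Fintype V] (A : V → V → Prop)
    (hor : IsOrientedGraph A)
    (hround : ∃ (n : ℕ) (e : V ≃ Fin n),
      ∀ x y z : V, A x y →
        (0 < ((e z : ℕ) + n - (e x : ℕ)) % n ∧
          ((e z : ℕ) + n - (e x : ℕ)) % n < ((e y : ℕ) + n - (e x : ℕ)) % n) →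
        A x z ∧ A z y) :
    dichromaticNumber A ≤ 2 :=
  round_dichromatic_le_two_general A hor hround
end

section
/- Every oriented graph with no induced directed triangle →C_3, no induced copy of S_2^+ (the oriented star on three vertices with two arcs leaving the center), and no induced copy of S_2^- (the oriented star on three vertices with two arcs entering the center) has dichromatic number at most 2. -/
open Relation

theorem exists_transGen_self_of_hasDicycle {V : Type*} {r : V → V → Prop} (h : HasDicycle r) :
    ∃ x, TransGen r x x := by
  obtain ⟨n, f, -, hf⟩ := h
  have walk : ∀ i : Fin (n + 1), TransGen r (f 0) (f i.succ) := by
    intro i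
    induction i using Fin.induction with
    | zero => simpa using TransGen.single (hf 0)
    | succ i ih =>
      have step := hf i.succ.castSucc
      rw [Fin.coeSucc_eq_succ, ← Fin.succ_castSucc] at step
      exact ih.tail step
  refine ⟨f 0, (walk (Fin.last n)).tail ?_⟩
  simpa using hf (Fin.last (n + 1))

theorem not_transGen_self_of_monotone {α β : Type*} [PartialOrder β] {r : α → α → Prop}
    (f : α → β) (hf : ∀ a b, r a b → f a ≤ f b)
    (hfib : ∀ i x, ¬ TransGen (fun a b => r a b ∧ f a = i ∧ f b = i) x x) (x : α) :
    ¬ TransGen r x x := by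
  have mono : ∀ {a b}, TransGen r a b → f a ≤ f b := fun h =>
    h.trans_induction_on (hf _ _) fun _ _ => le_trans
  intro hx
  suffices ∀ {a b}, TransGen r a b → f x ≤ f a → f b ≤ f x →
      TransGen (fun a b => r a b ∧ f a = f x ∧ f b = f x) a b from
    hfib (f x) x (this hx le_rfl le_rfl)
  intro a b hab hxa hbx
  induction hab with
  | single hab =>
    have := hf _ _ hab
    exact .single ⟨hab, by order, by order⟩
  | tail hab hbc ih =>
    have := mono hab
    have := hf _ _ hbc
    exact (ih (by order)).tail ⟨hbc, by order, by order⟩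

theorem injective_triple_of_ne {V : Type*} {x a b : V} (hxa : x ≠ a) (hxb : x ≠ b) (hab : a ≠ b) :
    Function.Injective ![x, a, b] := by
  intro i j hij
  fin_cases i <;> fin_cases j <;> simp_all [eq_comm]

section OrientedGraph

variable {V : Type*} {A : V → V → Prop}

theorem IsOrientedGraph.irrefl_s11 (hor : IsOrientedGraph A) (v : V) : ¬ A v v :=
  fun h => hor v v h h

theorem IsOrientedGraph.not_dicycle3 (hor : IsOrientedGraph A) (hC3 : ¬ HasInducedCopy A dirC3)
    (x y z : V) (hxy : A x y) (hyz : A y z) : ¬ A z x := by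
  intro hzx
  refine hC3 ⟨![x, y, z], injective_triple_of_ne ?_ ?_ ?_, ?_⟩
  · rintro rfl; exact hor.irrefl_s11 _ hxy
  · rintro rfl; exact hor _ _ hxy hyz
  · rintro rfl; exact hor.irrefl_s11 _ hyz
  · intro i j
    fin_cases i <;> fin_cases j <;>
      simp [dirC3, *, hor.irrefl_s11, hor _ _ hxy, hor _ _ hyz, hor _ _ hzx]

theorem IsOrientedGraph.isClique_outNeighbors (hor : IsOrientedGraph A)
    (hSp : ¬ HasInducedCopy A S2plus) (v : V) : (underlyingGraph A).IsClique {a | A v a} := by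
  intro a (ha : A v a) b (hb : A v b) hab
  refine ⟨hab, by_contra fun hnadj => hSp ⟨![v, a, b], injective_triple_of_ne ?_ ?_ hab, ?_⟩⟩
  · rintro rfl; exact hor.irrefl_s11 _ ha
  · rintro rfl; exact hor.irrefl_s11 _ hb
  · push Not at hnadj
    intro i j
    fin_cases i <;> fin_cases j <;> simp [S2plus, *, hor.irrefl_s11, hor _ _ ha, hor _ _ hb]

theorem IsOrientedGraph.isClique_inNeighbors (hor : IsOrientedGraph A)
    (hSm : ¬ HasInducedCopy A S2minus) (v : V) : (underlyingGraph A).IsClique {a | A a v} := by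
  intro a (ha : A a v) b (hb : A b v) hab
  refine ⟨hab, by_contra fun hnadj => hSm ⟨![v, a, b], injective_triple_of_ne ?_ ?_ hab, ?_⟩⟩
  · rintro rfl; exact hor.irrefl_s11 _ ha
  · rintro rfl; exact hor.irrefl_s11 _ hb
  · push Not at hnadj
    intro i j
    fin_cases i <;> fin_cases j <;> simp [S2minus, *, hor.irrefl_s11, hor _ _ ha, hor _ _ hb]

theorem not_transGen_self_of_isClique (hor : IsOrientedGraph A)
    (htri : ∀ x y z, A x y → A y z → ¬ A z x) {K : Set V}
    (hK : (underlyingGraph A).IsClique K) (x : V) :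
    ¬ TransGen (fun a b => A a b ∧ a ∈ K ∧ b ∈ K) x x := by
  suffices ∀ {y}, TransGen (fun a b => A a b ∧ a ∈ K ∧ b ∈ K) x y → A x y from
    fun hx => hor.irrefl_s11 x (this hx)
  intro y hxy
  have hxK : x ∈ K := by
    obtain ⟨b, hb, -⟩ := TransGen.head'_iff.1 hxy
    exact hb.2.1
  induction hxy with
  | single h => exact h.1
  | @tail b c _ hbc ih =>
    obtain ⟨hbc, -, hcK⟩ := hbc
    have hxc : x ≠ c := by rintro rfl; exact hor _ _ ih hbc
    exact (hK hxK hcK hxc).2.resolve_right (htri _ _ _ ih hbc)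

end OrientedGraph

section Coloring

variable {V : Type*} {A : V → V → Prop}

def monoArcsOn (A : V → V → Prop) {k : ℕ} (c : V → Fin k) (S : Finset V) (x y : V) : Prop :=
  A x y ∧ c x = c y ∧ x ∈ S ∧ y ∈ S

open Classical in
noncomputable def layer (A : V → V → Prop) (v u : V) : Fin 3 :=
  if u = v ∨ A v u then 0 else if A u v then 2 else 1

open Classical in
noncomputable def extendColoring (A : V → V → Prop) (v : V) (c : V → Fin 2) (u : V) : Fin 2 :=
  if u = v ∨ A v u then 0 else if A u v then 1 else c u

theorem layer_eq_zero {v u : V} : layer A v u = 0 ↔ u = v ∨ A v u := by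
  unfold layer; split_ifs <;> simp_all

theorem layer_eq_two {v u : V} : layer A v u = 2 → A u v := by
  unfold layer; split_ifs <;> simp_all

theorem extendColoring_of_layer_eq_one {v u : V} (c : V → Fin 2) (h : layer A v u = 1) :
    extendColoring A v c u = c u := by
  unfold layer at h; unfold extendColoring; split_ifs at h ⊢ <;> simp_all

theorem layer_le_layer (hout : ∀ v, (underlyingGraph A).IsClique {a | A v a})
    (hin : ∀ v, (underlyingGraph A).IsClique {a | A a v}) {v : V} {c : V → Fin 2} {x y : V}
    (hxy : A x y) (hc : extendColoring A v c x = extendColoring A v c y) :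
    layer A v x ≤ layer A v y := by
  by_cases hxP : x = v ∨ A v x
  · simp [layer, hxP]
  by_cases hyP : y = v ∨ A v y
  · by_cases hxM : A x v
    · simp [extendColoring, hxP, hxM, hyP] at hc
    rcases hyP with rfl | hvy
    · exact absurd hxy hxM
    have hxv : x ≠ v := fun h => hxP (.inl h)
    exact absurd ((hin y hxy hvy hxv).2.resolve_left hxM) (fun h => hxP (.inr h))
  by_cases hxM : A x v
  · have hvy : v ≠ y := fun h => hyP (.inl h.symm)
    have hyM : A y v := (hout x hxM hxy hvy).2.resolve_left (fun h => hyP (.inr h))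
    simp [layer, hxP, hyP, hxM, hyM]
  · simp only [layer, hxP, hyP, hxM, if_false]
    split_ifs <;> decide

theorem not_transGen_monoArcsOn_extendColoring (hor : IsOrientedGraph A)
    (htri : ∀ x y z, A x y → A y z → ¬ A z x)
    (hout : ∀ v, (underlyingGraph A).IsClique {a | A v a})
    (hin : ∀ v, (underlyingGraph A).IsClique {a | A a v}) {S : Finset V} {v : V} {c : V → Fin 2}
    (hc : ∀ x, ¬ TransGen (monoArcsOn A c {u ∈ S | layer A v u = 1}) x x) (x : V) :
    ¬ TransGen (monoArcsOn A (extendColoring A v c) S) x x := by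
  refine not_transGen_self_of_monotone (layer A v)
    (fun a b h => layer_le_layer hout hin h.1 h.2.1) (fun i x h => ?_) x
  match i with
  | 0 =>
    have hK : (underlyingGraph A).IsClique (insert v {a | A v a}) :=
      (hout v).insert fun b hb hvb => ⟨hvb, .inl hb⟩
    refine not_transGen_self_of_isClique hor htri hK x (TransGen.mono ?_ x x h)
    rintro a b ⟨⟨hab, -⟩, ha, hb⟩
    exact ⟨hab, layer_eq_zero.1 ha, layer_eq_zero.1 hb⟩
  | 1 =>
    refine hc x (TransGen.mono ?_ x x h)
    rintro a b ⟨⟨hab, hcab, haS, hbS⟩, ha, hb⟩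
    rw [extendColoring_of_layer_eq_one c ha, extendColoring_of_layer_eq_one c hb] at hcab
    exact ⟨hab, hcab, Finset.mem_filter.2 ⟨haS, ha⟩, Finset.mem_filter.2 ⟨hbS, hb⟩⟩
  | 2 =>
    refine not_transGen_self_of_isClique hor htri (hin v) x (TransGen.mono ?_ x x h)
    rintro a b ⟨⟨hab, -⟩, ha, hb⟩
    exact ⟨hab, layer_eq_two ha, layer_eq_two hb⟩

theorem exists_coloring_not_transGen_monoArcsOn (hor : IsOrientedGraph A)
    (htri : ∀ x y z, A x y → A y z → ¬ A z x)
    (hout : ∀ v, (underlyingGraph A).IsClique {a | A v a})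
    (hin : ∀ v, (underlyingGraph A).IsClique {a | A a v}) (S : Finset V) :
    ∃ c : V → Fin 2, ∀ x, ¬ TransGen (monoArcsOn A c S) x x := by
  induction S using Finset.strongInduction with
  | H S ih =>
    obtain rfl | ⟨v, hv⟩ := S.eq_empty_or_nonempty
    · refine ⟨0, fun x h => ?_⟩
      obtain ⟨b, ⟨-, -, hx, -⟩, -⟩ := TransGen.head'_iff.1 h
      exact Finset.notMem_empty x hx
    have hsub : {u ∈ S | layer A v u = 1} ⊂ S :=
      Finset.filter_ssubset.2 ⟨v, hv, by simp [layer]⟩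
    obtain ⟨c, hc⟩ := ih _ hsub
    exact ⟨extendColoring A v c, not_transGen_monoArcsOn_extendColoring hor htri hout hin hc⟩

end Coloring

/-- Every oriented graph with no induced `→C_3`, no induced `S_2^+` and no induced `S_2^-`
has dichromatic number at most 2. -/
theorem dichromatic_no_C3_no_S2 {V : Type*} [Fintype V] (A : V → V → Prop)
    (hor : IsOrientedGraph A)
    (hC3 : ¬ HasInducedCopy A dirC3)
    (hSp : ¬ HasInducedCopy A S2plus)
    (hSm : ¬ HasInducedCopy A S2minus) :
    dichromaticNumber A ≤ 2 := by
  obtain ⟨c, hc⟩ := exists_coloring_not_transGen_monoArcsOn hor (hor.not_dicycle3 hC3)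
    (hor.isClique_outNeighbors hSp) (hor.isClique_inNeighbors hSm) Finset.univ
  refine Nat.sInf_le ⟨c, fun hcyc => ?_⟩
  obtain ⟨x, hx⟩ := exists_transGen_self_of_hasDicycle hcyc
  exact hc x (TransGen.mono (fun a b h => ⟨h.1, h.2, Finset.mem_univ a, Finset.mem_univ b⟩) x x hx)
end

section
/- Let F be an oriented graph and suppose there exists an oriented graph D whose underlying undirected graph contains no K_4 and which contains no induced directed path P^+(3), such that D consists of: an induced copy F′ of F; an independent set L of vertices disjoint from V(F′) such that every vertex of F′ has at least one neighbor in L; and two further vertices u and v with the arc u→v, with arcs v→x and x→u for every x ∈ L, and with no arcs between {u, v} and V(F′). Then F contains no induced copy of the oriented graph R. -/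
/-!
Fix a neighbour `ℓ ∈ L` of the image of the vertex `a` of `R`, so that `v → ℓ → u`, while `u`
and `v` have no neighbour in the copy of `F`. Induced-`P⁺(3)`-freeness then propagates
adjacency to `ℓ` inside the copy: if `x → ℓ`, every in-neighbour `w` of `x` is adjacent to `ℓ`
(look at `w → x → ℓ → u`), and if `ℓ → x`, every out-neighbour `w` of `x` is adjacent to `ℓ`
(look at `v → ℓ → x → w`). `K₄`-freeness forbids `ℓ` to be adjacent to all three vertices of a
triangle. Starting from `a`, the propagation rules, steered by the triangles `abc` and `abd`,
reach all three vertices of the triangle `efg`.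
-/

open Relation

section InducedPath

variable {V : Type*} {D : V → V → Prop}

theorem IsOrientedGraph.hasInducedCopy_dirPath_three (hD : IsOrientedGraph D) {a b c d : V}
    (hab : D a b) (hbc : D b c) (hcd : D c d)
    (hac : ¬ SymmGen D a c) (hbd : ¬ SymmGen D b d) (had : ¬ SymmGen D a d) :
    HasInducedCopy D (dirPath 3) := by
  unfold SymmGen at hac hbd had
  have irrefl : ∀ x, ¬ D x x := fun x h => hD x x h h
  refine ⟨![a, b, c, d], ?_, ?_⟩
  · intro i j hij
    fin_cases i <;> fin_cases j <;> simp_all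
  · intro i j
    fin_cases i <;> fin_cases j <;> simp_all [dirPath, hD _ _ hab, hD _ _ hbc, hD _ _ hcd]

theorem IsOrientedGraph.symmGen_or_symmGen_of_path (hD : IsOrientedGraph D)
    (hP3 : ¬ HasInducedCopy D (dirPath 3)) {a b c d : V}
    (hab : D a b) (hbc : D b c) (hcd : D c d) (had : ¬ SymmGen D a d) :
    SymmGen D a c ∨ SymmGen D b d := by
  by_contra! h
  exact hP3 (hD.hasInducedCopy_dirPath_three hab hbc hcd h.1 h.2 had)

end InducedPath

/-- `O i` and `I i` record arcs `i → ℓ` and `ℓ → i` to and from an extra vertex `ℓ`. -/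
theorem Rdigraph.false_of_attachment (O I : Fin 7 → Prop)
    (hout : ∀ i j, Rdigraph j i → O i → O j ∨ I j)
    (hin : ∀ i j, Rdigraph i j → I i → O j ∨ I j)
    (htri : ∀ i j k, SymmGen Rdigraph i j → SymmGen Rdigraph i k → SymmGen Rdigraph j k →
      O i ∨ I i → O j ∨ I j → O k ∨ I k → False)
    (h0 : O 0 ∨ I 0) : False := by
  unfold Rdigraph at hout hin
  unfold SymmGen Rdigraph at htri
  rcases h0 with h0 | h0
  · have hc := hout 0 2 (by decide) h0
    have hd := hout 0 3 (by decide) h0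
    have hb : ¬ (O 1 ∨ I 1) := fun hb =>
      htri 0 1 2 (by decide) (by decide) (by decide) (.inl h0) hb hc
    have he : O 4 ∨ I 4 := hc.elim (fun hc => absurd (hout 2 1 (by decide) hc) hb)
      (hin 2 4 (by decide))
    have hg : O 6 ∨ I 6 := hd.elim (fun hd => absurd (hout 3 1 (by decide) hd) hb)
      (hin 3 6 (by decide))
    have hf : O 5 ∨ I 5 := he.elim (hout 4 5 (by decide))
      (fun he => absurd (hin 4 1 (by decide) he) hb)
    exact htri 4 5 6 (by decide) (by decide) (by decide) he hf hg
  · have hb := hin 0 1 (by decide) h0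
    have hc : ¬ (O 2 ∨ I 2) := fun hc =>
      htri 0 1 2 (by decide) (by decide) (by decide) (.inr h0) hb hc
    have hd : ¬ (O 3 ∨ I 3) := fun hd =>
      htri 0 1 3 (by decide) (by decide) (by decide) (.inr h0) hb hd
    have he : O 4 ∨ I 4 := hb.elim (hout 1 4 (by decide))
      (fun hb => absurd (hin 1 2 (by decide) hb) hc)
    have hg : O 6 ∨ I 6 := he.elim (fun he => absurd (hout 4 2 (by decide) he) hc)
      (hin 4 6 (by decide))
    have hf : O 5 ∨ I 5 := hg.elim (fun hg => absurd (hout 6 3 (by decide) hg) hd)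
      (hin 6 5 (by decide))
    exact htri 4 5 6 (by decide) (by decide) (by decide) he hf hg

theorem aux_class_R_free_general {VF VD : Type*}
    (F : VF → VF → Prop) (D : VD → VD → Prop)
    (horD : IsOrientedGraph D)
    (hK4 : UK4Free D)
    (hP3 : ¬ HasInducedCopy D (dirPath 3))
    (phi : VF → VD)
    (hcopy : ∀ x y : VF, F x y ↔ D (phi x) (phi y))
    (L : Set VD)
    (hnbr : ∀ x : VF, ∃ l ∈ L, D (phi x) l ∨ D l (phi x))
    (u v : VD)
    (hcyc : ∀ x ∈ L, D v x ∧ D x u)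
    (hnoarc : ∀ x : VF, ¬ (D u (phi x) ∨ D (phi x) u) ∧ ¬ (D v (phi x) ∨ D (phi x) v)) :
    ¬ HasInducedCopy F Rdigraph := by
  rintro ⟨r, -, hr⟩
  obtain ⟨ℓ, hℓL, hℓ⟩ := hnbr (r 0)
  obtain ⟨hvℓ, hℓu⟩ := hcyc ℓ hℓL
  have arc : ∀ i j, Rdigraph i j → D (phi (r i)) (phi (r j)) :=
    fun i j h => (hcopy _ _).1 ((hr i j).1 h)
  have hu : ∀ x, ¬ SymmGen D (phi x) u := fun x h => (hnoarc x).1 (symmGen_comm.1 h)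
  have hv : ∀ x, ¬ SymmGen D v (phi x) := fun x => (hnoarc x).2
  refine Rdigraph.false_of_attachment (fun i => D (phi (r i)) ℓ) (fun i => D ℓ (phi (r i)))
    ?_ ?_ ?_ hℓ
  · intro i j hji hiℓ
    exact (horD.symmGen_or_symmGen_of_path hP3 (arc j i hji) hiℓ hℓu (hu _)).resolve_right
      (hu _)
  · intro i j hij hℓi
    exact ((horD.symmGen_or_symmGen_of_path hP3 hvℓ hℓi (arc i j hij) (hv _)).resolve_left
      (hv _)).symm
  · intro i j k hij hik hjk hi hj hk
    exact hK4 ⟨_, _, _, ℓ, hij.imp (arc i j) (arc j i), hik.imp (arc i k) (arc k i), hi,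
      hjk.imp (arc j k) (arc k j), hj, hk⟩

/-- If an oriented graph `F` extends to a `K_4`-free, induced-`P^+(3)`-free oriented graph `D`
consisting of an induced copy of `F`, an independent set `L` (every vertex of the copy having
a neighbor in `L`), and two extra vertices `u, v` with `u→v`, `v→x→u` for all `x ∈ L`, and
no arcs between `{u, v}` and the copy of `F`, then `F` has no induced copy of `R`. -/
theorem aux_class_R_free {VF VD : Type*} [Fintype VF] [Fintype VD]
    (F : VF → VF → Prop) (D : VD → VD → Prop)
    (horD : IsOrientedGraph D)
    (hK4 : UK4Free D)
    (hP3 : ¬ HasInducedCopy D (dirPath 3))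
    (phi : VF → VD) (hinj : Function.Injective phi)
    (hcopy : ∀ x y : VF, F x y ↔ D (phi x) (phi y))
    (L : Set VD)
    (hLind : ∀ x ∈ L, ∀ y ∈ L, ¬ D x y)
    (hLF : ∀ x : VF, phi x ∉ L)
    (hnbr : ∀ x : VF, ∃ l ∈ L, D (phi x) l ∨ D l (phi x))
    (u v : VD)
    (huv : D u v)
    (huL : u ∉ L) (hvL : v ∉ L)
    (huF : ∀ x : VF, phi x ≠ u) (hvF : ∀ x : VF, phi x ≠ v)
    (hcyc : ∀ x ∈ L, D v x ∧ D x u)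
    (hnoarc : ∀ x : VF, ¬ (D u (phi x) ∨ D (phi x) u) ∧ ¬ (D v (phi x) ∨ D (phi x) v))
    (hcover : ∀ w : VD, (∃ x : VF, phi x = w) ∨ w ∈ L ∨ w = u ∨ w = v) :
    ¬ HasInducedCopy F Rdigraph :=
  aux_class_R_free_general F D horD hK4 hP3 phi hcopy L hnbr u v hcyc hnoarc
end
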